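/- Let E ∪ F be a regular union graph, i.e., the intersection graph E ∩ F is a regular closed subgraph of both E and F. Then, identifying E⁰ and F⁰ with their images in (E ∪ F)⁰, the singular vertex sets satisfy (E ∪ F)⁰_sing = E⁰_sing ∪ F⁰_sing. -/

import Mathlib

open Set Topology

/-- A continuous map which is proper: preimages of compact sets are compact. -/
def ProperCont {X Y : Type*} [TopologicalSpace X] [TopologicalSpace Y] (f : X → Y) : Prop :=
  Continuous f ∧ ∀ K : Set Y, IsCompact K → IsCompact (f ⁻¹' K)

/-- The raw data of a (topological) graph: a source and a range map from edges to vertices. -/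
structure GraphData (V E : Type*) where
  s : E → V
  r : E → V

/-- `g` is a topological graph: source and range are continuous and the range map is a
local homeomorphism. -/
structure IsTopGraph {V E : Type*} [TopologicalSpace V] [TopologicalSpace E]
    (g : GraphData V E) : Prop where
  s_cont : Continuous g.s
  r_cont : Continuous g.r
  r_locHomeo : IsLocalHomeomorph g.r

namespace GraphData

variable {V E : Type*} [TopologicalSpace V] [TopologicalSpace E]

/-- `E⁰_fin`: vertices having a neighborhood whose preimage under the source map is compact. -/
def finSet (g : GraphData V E) : Set V := {v | ∃ U ∈ nhds v, IsCompact (g.s ⁻¹' U)}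

/-- `E⁰_sink = E⁰ \ closure (s(E¹))`. -/
def sinkSet (g : GraphData V E) : Set V := (closure (Set.range g.s))ᶜ

/-- `E⁰_reg = E⁰_fin \ closure (E⁰_sink)`. -/
def regSet (g : GraphData V E) : Set V := g.finSet \ closure g.sinkSet

/-- `E⁰_sing = E⁰ \ E⁰_reg`. -/
def singSet (g : GraphData V E) : Set V := (g.regSet)ᶜ

/-- A set of vertices is negatively invariant if every regular vertex in it emits an
edge whose range lies in it. -/
def NegInvariant (g : GraphData V E) (Y : Set V) : Prop :=
  ∀ v ∈ Y ∩ g.regSet, ∃ e, g.s e = v ∧ g.r e ∈ Y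

/-- A topological graph is row-finite if `s(E¹) = E⁰_reg`. -/
def RowFinite (g : GraphData V E) : Prop := Set.range g.s = g.regSet

/-- The restriction of a graph to a pair of subsets of vertices and edges. -/
def restrict (g : GraphData V E) (G0 : Set V) (G1 : Set E)
    (hs : Set.MapsTo g.s G1 G0) (hr : Set.MapsTo g.r G1 G0) : GraphData G0 G1 where
  s := fun e => ⟨g.s e, hs e.2⟩
  r := fun e => ⟨g.r e, hr e.2⟩

end GraphData

/-- `(G0, G1)` determines a closed subgraph of `g` (in particular it is itself
a topological graph with the restricted source and range maps). -/
structure IsClosedSubgraph {V E : Type*} [TopologicalSpace V] [TopologicalSpace E]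
    (g : GraphData V E) (G0 : Set V) (G1 : Set E) : Prop where
  s_maps : Set.MapsTo g.s G1 G0
  r_maps : Set.MapsTo g.r G1 G0
  closed0 : IsClosed G0
  closed1 : IsClosed G1
  isGraph : IsTopGraph (g.restrict G0 G1 s_maps r_maps)

/-- A regular closed subgraph: a closed subgraph whose vertex set is negatively invariant
and such that `r⁻¹(G⁰) ⊆ G¹`. -/
structure IsRegularClosedSubgraph {V E : Type*} [TopologicalSpace V] [TopologicalSpace E]
    (g : GraphData V E) (G0 : Set V) (G1 : Set E) extends IsClosedSubgraph g G0 G1 : Prop where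
  negInv : g.NegInvariant G0
  r_pre : g.r ⁻¹' G0 ⊆ G1

/-- A regular factor map `(m¹, m⁰) : gG → gF` between topological graphs: a pair of proper
continuous maps satisfying (F1), (F2) and (F3). -/
structure IsRegularFactorMap {V1 E1 V2 E2 : Type*}
    [TopologicalSpace V1] [TopologicalSpace E1] [TopologicalSpace V2] [TopologicalSpace E2]
    (gG : GraphData V1 E1) (gF : GraphData V2 E2) (m0 : V1 → V2) (m1 : E1 → E2) : Prop where
  proper0 : ProperCont m0
  proper1 : ProperCont m1
  F1r : ∀ e, gF.r (m1 e) = m0 (gG.r e)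
  F1s : ∀ e, gF.s (m1 e) = m0 (gG.s e)
  F2 : ∀ (x : E2) (v : V1), gF.r x = m0 v → ∃! e : E1, m1 e = x ∧ gG.r e = v
  F3 : m0 '' gG.singSet ⊆ gF.singSet

section Adjunction

/-- The relation generating the adjunction-space identification: `a ∈ A ⊆ Y` is glued
to `f a ∈ X`. -/
inductive AdjRel {X Y : Type*} {A : Set Y} (f : A → X) : X ⊕ Y → X ⊕ Y → Prop
  | glue (a : A) : AdjRel f (Sum.inl (f a)) (Sum.inr a.1)

/-- The adjunction space `X ∪_f Y`. -/
def AdjSpace {X Y : Type*} {A : Set Y} (f : A → X) : Type _ := Quot (AdjRel f)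

instance {X Y : Type*} [TopologicalSpace X] [TopologicalSpace Y] {A : Set Y} (f : A → X) :
    TopologicalSpace (AdjSpace f) :=
  inferInstanceAs (TopologicalSpace (Quot (AdjRel f)))

/-- The canonical (closed) embedding `X → X ∪_f Y`. -/
def adjInc {X Y : Type*} {A : Set Y} (f : A → X) : X → AdjSpace f :=
  fun x => Quot.mk _ (Sum.inl x)

/-- The canonical map `p : Y → X ∪_f Y`. -/
def adjP {X Y : Type*} {A : Set Y} (f : A → X) : Y → AdjSpace f :=
  fun y => Quot.mk _ (Sum.inr y)

variable {VE EE VF EF : Type*}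

/-- The source map `s_∪` of the adjunction graph `E ∪_m F`. -/
def adjS (gE : GraphData VE EE) (gF : GraphData VF EF) {G0 : Set VF} {G1 : Set EF}
    (m0 : G0 → VE) (m1 : G1 → EE) (hs : Set.MapsTo gF.s G1 G0)
    (hF1s : ∀ e : G1, gE.s (m1 e) = m0 ⟨gF.s e, hs e.2⟩) :
    AdjSpace m1 → AdjSpace m0 :=
  Quot.lift
    (fun x => match x with
      | Sum.inl e => adjInc m0 (gE.s e)
      | Sum.inr e => adjP m0 (gF.s e))
    (by
      rintro _ _ ⟨a⟩
      show adjInc m0 (gE.s (m1 a)) = adjP m0 (gF.s a.1)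
      rw [hF1s a]
      exact Quot.sound (AdjRel.glue ⟨gF.s a.1, hs a.2⟩))

/-- The range map `r_∪` of the adjunction graph `E ∪_m F`. -/
def adjR (gE : GraphData VE EE) (gF : GraphData VF EF) {G0 : Set VF} {G1 : Set EF}
    (m0 : G0 → VE) (m1 : G1 → EE) (hr : Set.MapsTo gF.r G1 G0)
    (hF1r : ∀ e : G1, gE.r (m1 e) = m0 ⟨gF.r e, hr e.2⟩) :
    AdjSpace m1 → AdjSpace m0 :=
  Quot.lift
    (fun x => match x with
      | Sum.inl e => adjInc m0 (gE.r e)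
      | Sum.inr e => adjP m0 (gF.r e))
    (by
      rintro _ _ ⟨a⟩
      show adjInc m0 (gE.r (m1 a)) = adjP m0 (gF.r a.1)
      rw [hF1r a]
      exact Quot.sound (AdjRel.glue ⟨gF.r a.1, hr a.2⟩))

/-- The adjunction graph `E ∪_m F`, obtained by attaching the topological graph `F` to the
topological graph `E` along a closed subgraph `(G0, G1)` of `F` via the pair `(m¹, m⁰)`. -/
def adjGraph (gE : GraphData VE EE) (gF : GraphData VF EF) {G0 : Set VF} {G1 : Set EF}
    (m0 : G0 → VE) (m1 : G1 → EE)
    (hs : Set.MapsTo gF.s G1 G0) (hr : Set.MapsTo gF.r G1 G0)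
    (hF1s : ∀ e : G1, gE.s (m1 e) = m0 ⟨gF.s e, hs e.2⟩)
    (hF1r : ∀ e : G1, gE.r (m1 e) = m0 ⟨gF.r e, hr e.2⟩) :
    GraphData (AdjSpace m0) (AdjSpace m1) where
  s := adjS gE gF m0 m1 hs hF1s
  r := adjR gE gF m0 m1 hr hF1r

end Adjunction

/-!
A vertex of `E ∪ F` is regular exactly when all its representatives in `E⁰` and `F⁰` are.
For the `fin` sets this is because `E⁰` and `F⁰` are closed in the union: compact source
preimages pull back along the closed embeddings, and conversely compact neighbourhoods of the
representatives can be chosen compatibly across the gluing, by local compactness and properness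
of `m⁰`.

The heart of the matter is that no sink of `E` or `F` becomes regular in the union. A sink `x` of
`E` that is not a sink of the union is glued to some `a ∈ G⁰` in the closure of `s_F(F¹)`. If `a`
were regular in `F`, negative invariance of `G⁰` would give an edge of `G` emitted at `a`, that is,
an edge of `E` emitted at `x`; so `a` is a limit of sinks of `F`. Sinks of `F` that stay regular in
the union are glued into the closed set `closure s_E(E¹)`, and passing to the limit puts `x` there
as well, which is absurd. Sinks of `F` are then handled by approximating them with sinks of `E`,
using the regularity of `G` in `E`.
-/

open Function

section AdjSpace

variable {X Y : Type*} {A : Set Y} {f : A → X}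

theorem adjInc_glue (f : A → X) (a : A) : adjInc f (f a) = adjP f a :=
  Quot.sound (AdjRel.glue a)

@[elab_as_elim]
theorem AdjSpace.ind {motive : AdjSpace f → Prop} (inc : ∀ x, motive (adjInc f x))
    (p : ∀ y, motive (adjP f y)) (v : AdjSpace f) : motive v :=
  Quot.ind (fun z => Sum.casesOn z inc p) v

open Classical in
/-- A normal form for points of `X ∪_f Y`: glued points of `Y` are replaced by their partner
in `X`. -/
noncomputable def AdjSpace.rep (f : A → X) : AdjSpace f → X ⊕ Y :=
  Quot.lift (Sum.elim Sum.inl fun y => if h : y ∈ A then Sum.inl (f ⟨y, h⟩) else Sum.inr y)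
    (by rintro _ _ ⟨a⟩; simp [a.2])

open Classical in
theorem AdjSpace.rep_adjP (y : Y) :
    AdjSpace.rep f (adjP f y) = if h : y ∈ A then Sum.inl (f ⟨y, h⟩) else Sum.inr y :=
  rfl

theorem adjInc_injective (f : A → X) : Injective (adjInc f) :=
  fun _ _ h => Sum.inl_injective (congrArg (AdjSpace.rep f) h)

theorem adjInc_eq_adjP_iff {x : X} {y : Y} :
    adjInc f x = adjP f y ↔ ∃ h : y ∈ A, f ⟨y, h⟩ = x := by
  refine ⟨fun h => ?_, fun ⟨h, hx⟩ => hx ▸ adjInc_glue f ⟨y, h⟩⟩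
  have h' := congrArg (AdjSpace.rep f) h
  rw [AdjSpace.rep_adjP] at h'
  split_ifs at h' with hy
  exacts [⟨hy, (Sum.inl_injective h').symm⟩, (Sum.inl_ne_inr h').elim]

theorem adjP_injective (hf : Injective f) : Injective (adjP f) := by
  intro y y' h
  have h' := congrArg (AdjSpace.rep f) h
  rw [AdjSpace.rep_adjP, AdjSpace.rep_adjP] at h'
  split_ifs at h'
  · exact congrArg Subtype.val (hf (Sum.inl_injective h'))
  · exact Sum.inr_injective h'

theorem AdjSpace.image_preimage_union (S : Set (AdjSpace f)) :
    adjInc f '' (adjInc f ⁻¹' S) ∪ adjP f '' (adjP f ⁻¹' S) = S := by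
  refine Subset.antisymm (union_subset (image_preimage_subset _ _) (image_preimage_subset _ _))
    fun v hv => ?_
  induction v using AdjSpace.ind with
  | inc x => exact Or.inl ⟨x, hv, rfl⟩
  | p y => exact Or.inr ⟨y, hv, rfl⟩

theorem adjP_preimage_image_adjInc (S : Set X) :
    adjP f ⁻¹' (adjInc f '' S) = Subtype.val '' (f ⁻¹' S) := by
  ext y
  constructor
  · rintro ⟨x, hx, he⟩
    obtain ⟨h, rfl⟩ := adjInc_eq_adjP_iff.1 he
    exact ⟨⟨y, h⟩, hx, rfl⟩
  · rintro ⟨a, ha, rfl⟩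
    exact ⟨f a, ha, adjInc_glue f a⟩

theorem adjInc_preimage_image_adjP (T : Set Y) :
    adjInc f ⁻¹' (adjP f '' T) = f '' (Subtype.val ⁻¹' T) := by
  ext x
  constructor
  · rintro ⟨y, hy, he⟩
    obtain ⟨h, rfl⟩ := adjInc_eq_adjP_iff.1 he.symm
    exact ⟨⟨y, h⟩, hy, rfl⟩
  · rintro ⟨a, ha, rfl⟩
    exact ⟨a, ha, (adjInc_glue f a).symm⟩

theorem adjInc_preimage_union (S : Set X) (T : Set Y) :
    adjInc f ⁻¹' (adjInc f '' S ∪ adjP f '' T) = S ∪ f '' (Subtype.val ⁻¹' T) := by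
  rw [preimage_union, (adjInc_injective f).preimage_image, adjInc_preimage_image_adjP]

theorem adjP_preimage_union (hf : Injective f) (S : Set X) (T : Set Y) :
    adjP f ⁻¹' (adjInc f '' S ∪ adjP f '' T) = Subtype.val '' (f ⁻¹' S) ∪ T := by
  rw [preimage_union, (adjP_injective hf).preimage_image, adjP_preimage_image_adjInc]

variable [TopologicalSpace X] [TopologicalSpace Y]

theorem continuous_adjInc : Continuous (adjInc f) :=
  continuous_quot_mk.comp continuous_inl

theorem continuous_adjP : Continuous (adjP f) :=
  continuous_quot_mk.comp continuous_inr

theorem AdjSpace.isClosed_iff {S : Set (AdjSpace f)} :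
    IsClosed S ↔ IsClosed (adjInc f ⁻¹' S) ∧ IsClosed (adjP f ⁻¹' S) :=
  isQuotientMap_quot_mk.isCoinducing.isClosed_preimage.symm.trans isClosed_sum_iff

theorem isClosedMap_adjInc (hA : IsClosed A) (hf : Continuous f) : IsClosedMap (adjInc f) := by
  intro C hC
  rw [AdjSpace.isClosed_iff, (adjInc_injective f).preimage_image, adjP_preimage_image_adjInc]
  exact ⟨hC, hA.isClosedEmbedding_subtypeVal.isClosedMap _ (hC.preimage hf)⟩

theorem isClosedMap_adjP (hf : IsClosedMap f) (hinj : Injective f) : IsClosedMap (adjP f) := by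
  intro C hC
  rw [AdjSpace.isClosed_iff, (adjP_injective hinj).preimage_image, adjInc_preimage_image_adjP]
  exact ⟨hf _ (hC.preimage continuous_subtype_val), hC⟩

theorem isClosedEmbedding_adjInc (hA : IsClosed A) (hf : Continuous f) :
    IsClosedEmbedding (adjInc f) :=
  .of_continuous_injective_isClosedMap continuous_adjInc (adjInc_injective f)
    (isClosedMap_adjInc hA hf)

theorem isClosedEmbedding_adjP (hf : IsClosedMap f) (hinj : Injective f) :
    IsClosedEmbedding (adjP f) :=
  .of_continuous_injective_isClosedMap continuous_adjP (adjP_injective hinj)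
    (isClosedMap_adjP hf hinj)

theorem AdjSpace.union_mem_nhds (hinc : IsClosedMap (adjInc f)) (hp : IsClosedMap (adjP f))
    {v : AdjSpace f} {S : Set X} {T : Set Y} (hS : adjInc f ⁻¹' {v} ⊆ interior S)
    (hT : adjP f ⁻¹' {v} ⊆ interior T) : adjInc f '' S ∪ adjP f '' T ∈ 𝓝 v := by
  have hC : IsClosed (adjInc f '' (interior S)ᶜ ∪ adjP f '' (interior T)ᶜ) :=
    (hinc _ isOpen_interior.isClosed_compl).union (hp _ isOpen_interior.isClosed_compl)
  refine Filter.mem_of_superset (hC.isOpen_compl.mem_nhds ?_) fun w hw => ?_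
  · rintro (⟨x, hx, rfl⟩ | ⟨y, hy, rfl⟩)
    exacts [hx (hS rfl), hy (hT rfl)]
  · induction w using AdjSpace.ind with
    | inc x =>
      exact Or.inl ⟨x, interior_subset (not_not.1 fun h => hw (Or.inl ⟨x, h, rfl⟩)), rfl⟩
    | p y =>
      exact Or.inr ⟨y, interior_subset (not_not.1 fun h => hw (Or.inr ⟨y, h, rfl⟩)), rfl⟩

end AdjSpace

theorem ProperCont.isProperMap {X Y : Type*} [TopologicalSpace X] [TopologicalSpace Y]
    [T2Space Y] [LocallyCompactSpace Y] {f : X → Y} (hf : ProperCont f) : IsProperMap f :=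
  isProperMap_iff_isCompact_preimage.2 hf

theorem exists_isCompact_between_of_isClosedMap {A X Y : Type*} [TopologicalSpace A]
    [TopologicalSpace X] [TopologicalSpace Y] [LocallyCompactSpace X] {φ : A → X} {ψ : A → Y}
    (hφ : IsClosedMap φ) (hψ : Continuous ψ) {R UX : Set X} {UY : Set Y} (hR : IsCompact R)
    (hRUX : R ⊆ interior UX) (hRUY : ∀ a, φ a ∈ R → ψ a ∈ interior UY) :
    ∃ K, IsCompact K ∧ R ⊆ interior K ∧ K ⊆ UX ∧ ψ '' (φ ⁻¹' K) ⊆ UY := by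
  have hC : IsClosed (φ '' (ψ ⁻¹' (interior UY)ᶜ)) :=
    hφ _ (isOpen_interior.isClosed_compl.preimage hψ)
  obtain ⟨K, hK, hRK, hKU⟩ := exists_compact_between hR (isOpen_interior.inter hC.isOpen_compl)
    fun x hx => ⟨hRUX hx, by rintro ⟨a, ha, rfl⟩; exact ha (hRUY a hx)⟩
  refine ⟨K, hK, hRK, fun x hx => interior_subset (hKU hx).1, ?_⟩
  rintro _ ⟨a, ha, rfl⟩
  exact interior_subset (not_not.1 fun h => (hKU ha).2 ⟨a, h, rfl⟩)

namespace GraphData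

variable {V E : Type*} [TopologicalSpace V] [TopologicalSpace E] (g : GraphData V E)

theorem isOpen_finSet : IsOpen g.finSet := by
  refine isOpen_iff_mem_nhds.2 fun v ⟨U, hU, hc⟩ => ?_
  filter_upwards [eventually_mem_nhds_iff.2 hU] with w hw using ⟨U, hw, hc⟩

theorem isOpen_regSet : IsOpen g.regSet :=
  g.isOpen_finSet.sdiff isClosed_closure

theorem regSet_subset_closure_range_s : g.regSet ⊆ closure (range g.s) :=
  fun _ hv => not_not.1 fun h => hv.2 (subset_closure h)

theorem exists_subset_interior_isCompact_preimage {R : Set V} (hR : R.Subsingleton)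
    (hRfin : R ⊆ g.finSet) : ∃ U, R ⊆ interior U ∧ IsCompact (g.s ⁻¹' U) := by
  rcases hR.eq_empty_or_singleton with rfl | ⟨v, rfl⟩
  · exact ⟨∅, empty_subset _, by simp⟩
  · obtain ⟨U, hU, hc⟩ := hRfin rfl
    exact ⟨U, singleton_subset_iff.2 (mem_interior_iff_mem_nhds.2 hU), hc⟩

end GraphData

theorem IsRegularClosedSubgraph.exists_mem_s_eq {V E : Type*} [TopologicalSpace V]
    [TopologicalSpace E] {g : GraphData V E} {G0 : Set V} {G1 : Set E}
    (hG : IsRegularClosedSubgraph g G0 G1) {v : V} (hv : v ∈ G0) (hreg : v ∈ g.regSet) :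
    ∃ e ∈ G1, g.s e = v := by
  obtain ⟨e, hse, hre⟩ := hG.negInv v ⟨hv, hreg⟩
  exact ⟨e, hG.r_pre hre, hse⟩

theorem apply_mem_range_s_of_val_mem_regSet {VE EE VF EF : Type*} [TopologicalSpace VF]
    [TopologicalSpace EF] {gE : GraphData VE EE} {gF : GraphData VF EF} {G0 : Set VF}
    {G1 : Set EF} {m0 : G0 → VE} {m1 : G1 → EE} (hGF : IsRegularClosedSubgraph gF G0 G1)
    (hF1s : ∀ e : G1, gE.s (m1 e) = m0 ⟨gF.s e, hGF.s_maps e.2⟩) (a : G0)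
    (ha : (a : VF) ∈ gF.regSet) : m0 a ∈ range gE.s := by
  obtain ⟨e, he, hse⟩ := hGF.exists_mem_s_eq a.2 ha
  exact ⟨m1 ⟨e, he⟩, (hF1s _).trans (congrArg m0 (Subtype.ext hse))⟩

theorem val_mem_range_s_of_apply_mem_regSet {VE EE VF EF : Type*} [TopologicalSpace VE]
    [TopologicalSpace EE] {gE : GraphData VE EE} {gF : GraphData VF EF} {G0 : Set VF}
    {G1 : Set EF} {m0 : G0 → VE} {m1 : G1 → EE}
    (hGE : IsRegularClosedSubgraph gE (range m0) (range m1)) (hinj0 : Injective m0)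
    {hs : MapsTo gF.s G1 G0} (hF1s : ∀ e : G1, gE.s (m1 e) = m0 ⟨gF.s e, hs e.2⟩) (a : G0)
    (ha : m0 a ∈ gE.regSet) : (a : VF) ∈ range gF.s := by
  obtain ⟨_, ⟨e, rfl⟩, hse⟩ := hGE.exists_mem_s_eq ⟨a, rfl⟩ ha
  exact ⟨e, congrArg Subtype.val (hinj0 ((hF1s e).symm.trans hse))⟩

section UnionGraph

variable {VE EE VF EF : Type*} {gE : GraphData VE EE} {gF : GraphData VF EF}
  {G0 : Set VF} {G1 : Set EF} {m0 : G0 → VE} {m1 : G1 → EE}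
  {hs : MapsTo gF.s G1 G0} {hr : MapsTo gF.r G1 G0}
  {hF1s : ∀ e : G1, gE.s (m1 e) = m0 ⟨gF.s e, hs e.2⟩}
  {hF1r : ∀ e : G1, gE.r (m1 e) = m0 ⟨gF.r e, hr e.2⟩}

local notation "gU" => adjGraph gE gF m0 m1 hs hr hF1s hF1r

theorem range_adjGraph_s :
    range (gU).s = adjInc m0 '' range gE.s ∪ adjP m0 '' range gF.s := by
  refine Subset.antisymm ?_ ?_
  · rintro _ ⟨e, rfl⟩
    induction e using AdjSpace.ind with
    | inc e => exact Or.inl ⟨_, ⟨e, rfl⟩, rfl⟩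
    | p e => exact Or.inr ⟨_, ⟨e, rfl⟩, rfl⟩
  · rintro _ (⟨_, ⟨e, rfl⟩, rfl⟩ | ⟨_, ⟨e, rfl⟩, rfl⟩)
    exacts [⟨adjInc m1 e, rfl⟩, ⟨adjP m1 e, rfl⟩]

theorem isCompact_adjGraph_s_preimage [TopologicalSpace EE] [TopologicalSpace EF]
    {N : Set (AdjSpace m0)}
    (hE : IsCompact (gE.s ⁻¹' (adjInc m0 ⁻¹' N)))
    (hF : IsCompact (gF.s ⁻¹' (adjP m0 ⁻¹' N))) :
    IsCompact ((gU).s ⁻¹' N) := by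
  rw [← AdjSpace.image_preimage_union ((gU).s ⁻¹' N)]
  exact (hE.image continuous_adjInc).union (hF.image continuous_adjP)

variable [TopologicalSpace VE] [TopologicalSpace VF]

theorem closure_range_adjGraph_s (hG0 : IsClosed G0) (hm0 : IsProperMap m0)
    (hinj0 : Injective m0) : closure (range (gU).s) =
      adjInc m0 '' closure (range gE.s) ∪ adjP m0 '' closure (range gF.s) := by
  rw [range_adjGraph_s, closure_union,
    (isClosedEmbedding_adjInc hG0 hm0.continuous).closure_image_eq,
    (isClosedEmbedding_adjP hm0.isClosedMap hinj0).closure_image_eq]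

theorem adjInc_preimage_closure_range_adjGraph_s (hG0 : IsClosed G0) (hm0 : IsProperMap m0)
    (hinj0 : Injective m0) : adjInc m0 ⁻¹' closure (range (gU).s) =
      closure (range gE.s) ∪ m0 '' (Subtype.val ⁻¹' closure (range gF.s)) := by
  rw [closure_range_adjGraph_s hG0 hm0 hinj0, adjInc_preimage_union]

theorem adjP_preimage_closure_range_adjGraph_s (hG0 : IsClosed G0) (hm0 : IsProperMap m0)
    (hinj0 : Injective m0) : adjP m0 ⁻¹' closure (range (gU).s) =
      Subtype.val '' (m0 ⁻¹' closure (range gE.s)) ∪ closure (range gF.s) := by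
  rw [closure_range_adjGraph_s hG0 hm0 hinj0, adjP_preimage_union hinj0]

theorem closure_sinkSet_adjGraph_subset (hG0 : IsClosed G0) (hm0 : IsProperMap m0)
    (hinj0 : Injective m0) : closure (gU).sinkSet ⊆
      adjInc m0 '' closure gE.sinkSet ∪ adjP m0 '' closure gF.sinkSet := by
  have hsink : (gU).sinkSet ⊆ adjInc m0 '' gE.sinkSet ∪ adjP m0 '' gF.sinkSet := by
    intro v hv
    rw [GraphData.sinkSet, mem_compl_iff, closure_range_adjGraph_s hG0 hm0 hinj0] at hv
    induction v using AdjSpace.ind with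
    | inc x => exact Or.inl ⟨x, fun hx => hv (Or.inl ⟨x, hx, rfl⟩), rfl⟩
    | p y => exact Or.inr ⟨y, fun hy => hv (Or.inr ⟨y, hy, rfl⟩), rfl⟩
  calc closure (gU).sinkSet
      ⊆ closure (adjInc m0 '' gE.sinkSet ∪ adjP m0 '' gF.sinkSet) := closure_mono hsink
    _ = adjInc m0 '' closure gE.sinkSet ∪ adjP m0 '' closure gF.sinkSet := by
      rw [closure_union, (isClosedEmbedding_adjInc hG0 hm0.continuous).closure_image_eq,
        (isClosedEmbedding_adjP hm0.isClosedMap hinj0).closure_image_eq]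

variable [TopologicalSpace EE] [TopologicalSpace EF]

theorem mem_finSet_of_adjInc_mem_finSet (hG1 : IsClosed G1) (hm1 : Continuous m1) {x : VE}
    (hx : adjInc m0 x ∈ (gU).finSet) : x ∈ gE.finSet := by
  obtain ⟨N, hN, hc⟩ := hx
  exact ⟨adjInc m0 ⁻¹' N, continuous_adjInc.continuousAt.preimage_mem_nhds hN,
    (isClosedEmbedding_adjInc hG1 hm1).isCompact_preimage hc⟩

theorem mem_finSet_of_adjP_mem_finSet (hm1 : IsClosedMap m1) (hinj1 : Injective m1) {y : VF}
    (hy : adjP m0 y ∈ (gU).finSet) : y ∈ gF.finSet := by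
  obtain ⟨N, hN, hc⟩ := hy
  exact ⟨adjP m0 ⁻¹' N, continuous_adjP.continuousAt.preimage_mem_nhds hN,
    (isClosedEmbedding_adjP hm1 hinj1).isCompact_preimage hc⟩

theorem mem_adjGraph_finSet [LocallyCompactSpace VE] [T2Space VE] [LocallyCompactSpace VF]
    [T2Space VF] (hsE : Continuous gE.s) (hsF : Continuous gF.s) (hG0 : IsClosed G0)
    (hm0 : IsProperMap m0) (hinj0 : Injective m0) {v : AdjSpace m0}
    (hvE : adjInc m0 ⁻¹' {v} ⊆ gE.finSet) (hvF : adjP m0 ⁻¹' {v} ⊆ gF.finSet) :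
    v ∈ (gU).finSet := by
  have hval : IsProperMap (Subtype.val : G0 → VF) := hG0.isClosedEmbedding_subtypeVal.isProperMap
  have hRE : (adjInc m0 ⁻¹' {v}).Subsingleton :=
    subsingleton_singleton.preimage (adjInc_injective m0)
  have hRF : (adjP m0 ⁻¹' {v}).Subsingleton :=
    subsingleton_singleton.preimage (adjP_injective hinj0)
  have hglue (a : G0) : adjInc m0 (m0 a) = v ↔ adjP m0 a = v := by rw [adjInc_glue]
  obtain ⟨UE, hvUE, hUE⟩ := gE.exists_subset_interior_isCompact_preimage hRE hvE
  obtain ⟨UF, hvUF, hUF⟩ := gF.exists_subset_interior_isCompact_preimage hRF hvF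
  -- each compact set is chosen so that the part glued to the other side lands in the other `U`
  obtain ⟨KE, hKE, hvKE, hKUE, hKEF⟩ := exists_isCompact_between_of_isClosedMap hm0.isClosedMap
    continuous_subtype_val hRE.isCompact hvUE fun a ha => hvUF ((hglue a).1 ha)
  obtain ⟨KF, hKF, hvKF, hKUF, hKFE⟩ := exists_isCompact_between_of_isClosedMap hval.isClosedMap
    hm0.continuous hRF.isCompact hvUF fun a ha => hvUE ((hglue a).2 ha)
  refine ⟨adjInc m0 '' KE ∪ adjP m0 '' KF, AdjSpace.union_mem_nhds
    (isClosedMap_adjInc hG0 hm0.continuous) (isClosedMap_adjP hm0.isClosedMap hinj0) hvKE hvKF,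
    isCompact_adjGraph_s_preimage ?_ ?_⟩
  · rw [adjInc_preimage_union]
    exact hUE.of_isClosed_subset ((hKE.union ((hval.isCompact_preimage hKF).image
      hm0.continuous)).isClosed.preimage hsE) (preimage_mono (union_subset hKUE hKFE))
  · rw [adjP_preimage_union hinj0]
    exact hUF.of_isClosed_subset ((((hm0.isCompact_preimage hKE).image
      continuous_subtype_val).union hKF).isClosed.preimage hsF)
      (preimage_mono (union_subset hKEF hKUF))

theorem adjInc_notMem_regSet_of_mem_sinkSet (hGF : IsRegularClosedSubgraph gF G0 G1)
    (hm0 : IsProperMap m0) (hinj0 : Injective m0) (hm1 : IsClosedMap m1)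
    (hinj1 : Injective m1) {x : VE} (hx : x ∈ gE.sinkSet) : adjInc m0 x ∉ (gU).regSet := by
  intro hxU
  have hxcl := (gU).regSet_subset_closure_range_s hxU
  rw [← mem_preimage, adjInc_preimage_closure_range_adjGraph_s hGF.closed0 hm0 hinj0] at hxcl
  obtain ⟨a, -, rfl⟩ := hxcl.resolve_left hx
  have haU : adjP m0 a ∈ (gU).regSet := adjInc_glue m0 a ▸ hxU
  have haF : (a : VF) ∈ closure gF.sinkSet := not_not.1 fun h => hx <| subset_closure <|
    apply_mem_range_s_of_val_mem_regSet hGF hF1s a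
      ⟨mem_finSet_of_adjP_mem_finSet hm1 hinj1 haU.1, h⟩
  have hsub : adjP m0 ⁻¹' (gU).regSet ∩ gF.sinkSet ⊆
      Subtype.val '' (m0 ⁻¹' closure (range gE.s)) := fun y ⟨hyU, hy⟩ => by
    have hycl := (gU).regSet_subset_closure_range_s hyU
    rw [← mem_preimage, adjP_preimage_closure_range_adjGraph_s hGF.closed0 hm0 hinj0] at hycl
    exact hycl.resolve_right hy
  have hclosed : IsClosed (Subtype.val '' (m0 ⁻¹' closure (range gE.s))) :=
    hGF.closed0.isClosedEmbedding_subtypeVal.isClosedMap _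
      (isClosed_closure.preimage hm0.continuous)
  obtain ⟨b, hb, hba⟩ := closure_minimal hsub hclosed <|
    ((gU).isOpen_regSet.preimage continuous_adjP).inter_closure ⟨haU, haF⟩
  exact hx (Subtype.val_injective hba ▸ hb)

theorem adjP_notMem_regSet_of_mem_sinkSet (hGF : IsRegularClosedSubgraph gF G0 G1)
    (hGE : IsRegularClosedSubgraph gE (range m0) (range m1)) (hm0 : IsProperMap m0)
    (hinj0 : Injective m0) (hm1 : IsProperMap m1) (hinj1 : Injective m1) {y : VF}
    (hy : y ∈ gF.sinkSet) : adjP m0 y ∉ (gU).regSet := by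
  intro hyU
  have hycl := (gU).regSet_subset_closure_range_s hyU
  rw [← mem_preimage, adjP_preimage_closure_range_adjGraph_s hGF.closed0 hm0 hinj0] at hycl
  obtain ⟨a, -, rfl⟩ := hycl.resolve_right hy
  have haU : adjInc m0 (m0 a) ∈ (gU).regSet := (adjInc_glue m0 a).symm ▸ hyU
  have haE : m0 a ∈ closure gE.sinkSet := not_not.1 fun h => hy <| subset_closure <|
    val_mem_range_s_of_apply_mem_regSet hGE hinj0 hF1s a
      ⟨mem_finSet_of_adjInc_mem_finSet hGF.closed1 hm1.continuous haU.1, h⟩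
  obtain ⟨x, hxU, hx⟩ :=
    mem_closure_iff.1 haE _ ((gU).isOpen_regSet.preimage continuous_adjInc) haU
  exact adjInc_notMem_regSet_of_mem_sinkSet hGF hm0 hinj0 hm1.isClosedMap hinj1 hx hxU

theorem mem_regSet_of_adjInc_mem_regSet (hGF : IsRegularClosedSubgraph gF G0 G1)
    (hm0 : IsProperMap m0) (hinj0 : Injective m0) (hm1 : IsProperMap m1)
    (hinj1 : Injective m1) {x : VE} (hx : adjInc m0 x ∈ (gU).regSet) : x ∈ gE.regSet := by
  refine ⟨mem_finSet_of_adjInc_mem_finSet hGF.closed1 hm1.continuous hx.1, fun hcl => ?_⟩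
  obtain ⟨x', hx'U, hx'⟩ :=
    mem_closure_iff.1 hcl _ ((gU).isOpen_regSet.preimage continuous_adjInc) hx
  exact adjInc_notMem_regSet_of_mem_sinkSet hGF hm0 hinj0 hm1.isClosedMap hinj1 hx' hx'U

theorem mem_regSet_of_adjP_mem_regSet (hGF : IsRegularClosedSubgraph gF G0 G1)
    (hGE : IsRegularClosedSubgraph gE (range m0) (range m1)) (hm0 : IsProperMap m0)
    (hinj0 : Injective m0) (hm1 : IsProperMap m1) (hinj1 : Injective m1) {y : VF}
    (hy : adjP m0 y ∈ (gU).regSet) : y ∈ gF.regSet := by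
  refine ⟨mem_finSet_of_adjP_mem_finSet hm1.isClosedMap hinj1 hy.1, fun hcl => ?_⟩
  obtain ⟨y', hy'U, hy'⟩ :=
    mem_closure_iff.1 hcl _ ((gU).isOpen_regSet.preimage continuous_adjP) hy
  exact adjP_notMem_regSet_of_mem_sinkSet hGF hGE hm0 hinj0 hm1 hinj1 hy' hy'U

theorem mem_adjGraph_regSet_iff [LocallyCompactSpace VE] [T2Space VE] [LocallyCompactSpace VF]
    [T2Space VF] (hsE : Continuous gE.s) (hsF : Continuous gF.s)
    (hGF : IsRegularClosedSubgraph gF G0 G1)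
    (hGE : IsRegularClosedSubgraph gE (range m0) (range m1)) (hm0 : IsProperMap m0)
    (hinj0 : Injective m0) (hm1 : IsProperMap m1) (hinj1 : Injective m1) {v : AdjSpace m0} :
    v ∈ (gU).regSet ↔
        (∀ x, adjInc m0 x = v → x ∈ gE.regSet) ∧ ∀ y, adjP m0 y = v → y ∈ gF.regSet := by
  refine ⟨fun hv => ⟨?_, ?_⟩, fun ⟨hvE, hvF⟩ => ⟨?_, fun hv => ?_⟩⟩
  · rintro x rfl
    exact mem_regSet_of_adjInc_mem_regSet hGF hm0 hinj0 hm1 hinj1 hv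
  · rintro y rfl
    exact mem_regSet_of_adjP_mem_regSet hGF hGE hm0 hinj0 hm1 hinj1 hv
  · exact mem_adjGraph_finSet hsE hsF hGF.closed0 hm0 hinj0 (fun x hx => (hvE x hx).1)
      fun y hy => (hvF y hy).1
  · rcases closure_sinkSet_adjGraph_subset hGF.closed0 hm0 hinj0 hv with
      ⟨x, hx, rfl⟩ | ⟨y, hy, rfl⟩
    exacts [(hvE x rfl).2 hx, (hvF y rfl).2 hy]

end UnionGraph

theorem unionGraph_singSet_eq_union_general
    {VE EE VF EF : Type*} [TopologicalSpace VE] [TopologicalSpace EE]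
    [TopologicalSpace VF] [TopologicalSpace EF]
    [LocallyCompactSpace VE] [T2Space VE] [LocallyCompactSpace EE] [T2Space EE]
    [LocallyCompactSpace VF] [T2Space VF]
    (gE : GraphData VE EE) (gF : GraphData VF EF)
    (hE : IsTopGraph gE) (hF : IsTopGraph gF)
    {G0 : Set VF} {G1 : Set EF}
    (hGF : IsRegularClosedSubgraph gF G0 G1)
    (m0 : G0 → VE) (m1 : G1 → EE) (hm0 : ProperCont m0) (hm1 : ProperCont m1)
    (hinj0 : Function.Injective m0) (hinj1 : Function.Injective m1)
    (hF1s : ∀ e : G1, gE.s (m1 e) = m0 ⟨gF.s e, hGF.s_maps e.2⟩)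
    (hF1r : ∀ e : G1, gE.r (m1 e) = m0 ⟨gF.r e, hGF.r_maps e.2⟩)
    (hGE : IsRegularClosedSubgraph gE (Set.range m0) (Set.range m1)) :
    (adjGraph gE gF m0 m1 hGF.s_maps hGF.r_maps hF1s hF1r).singSet =
      adjInc m0 '' gE.singSet ∪ adjP m0 '' gF.singSet := by
  ext v
  simp only [GraphData.singSet, mem_compl_iff, mem_union, mem_image, mem_adjGraph_regSet_iff
    hE.s_cont hF.s_cont hGF hGE hm0.isProperMap hinj0 hm1.isProperMap hinj1, not_and_or,
    not_forall, exists_prop, and_comm]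

/-- Let `E ∪ F` be a regular union graph, i.e. the intersection graph `E ∩ F` (here
`(G0, G1)` inside `F`, realized inside `E` via the injective maps `m⁰`, `m¹`) is a regular
closed subgraph of both `E` and `F`. Then, identifying `E⁰` and `F⁰` with their images in
`(E ∪ F)⁰`, one has `(E ∪ F)⁰_sing = E⁰_sing ∪ F⁰_sing`. -/
theorem unionGraph_singSet_eq_union
    {VE EE VF EF : Type*} [TopologicalSpace VE] [TopologicalSpace EE]
    [TopologicalSpace VF] [TopologicalSpace EF]
    [LocallyCompactSpace VE] [T2Space VE] [LocallyCompactSpace EE] [T2Space EE]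
    [LocallyCompactSpace VF] [T2Space VF] [LocallyCompactSpace EF] [T2Space EF]
    (gE : GraphData VE EE) (gF : GraphData VF EF)
    (hE : IsTopGraph gE) (hF : IsTopGraph gF)
    {G0 : Set VF} {G1 : Set EF}
    (hGF : IsRegularClosedSubgraph gF G0 G1)
    (m0 : G0 → VE) (m1 : G1 → EE) (hm0 : ProperCont m0) (hm1 : ProperCont m1)
    (hinj0 : Function.Injective m0) (hinj1 : Function.Injective m1)
    (hF1s : ∀ e : G1, gE.s (m1 e) = m0 ⟨gF.s e, hGF.s_maps e.2⟩)
    (hF1r : ∀ e : G1, gE.r (m1 e) = m0 ⟨gF.r e, hGF.r_maps e.2⟩)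
    (hGE : IsRegularClosedSubgraph gE (Set.range m0) (Set.range m1)) :
    (adjGraph gE gF m0 m1 hGF.s_maps hGF.r_maps hF1s hF1r).singSet =
      adjInc m0 '' gE.singSet ∪ adjP m0 '' gF.singSet :=
  unionGraph_singSet_eq_union_general gE gF hE hF hGF m0 m1 hm0 hm1 hinj0 hinj1 hF1s hF1r hGE
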